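/- arXiv:1712.05549 — 2 statements merged into one kernel-verified Lean document; each statement's English description precedes it below -/
import Mathlib

section
/- Let n ≥ 4 be an even integer. There exists a constant C = C(n) > 0 such that for every finite field F of odd characteristic and every nontrivial additive character e of F, the 0-sphere S₀ = {ξ ∈ F^n : ξ·ξ = 0} satisfies: | ∑_{ξ∈S₀} e(α·ξ) | ≤ C |F|^{n/2} for every α ∈ F^n with α ≠ 0, and C^{-1} |F|^{n-1} ≤ |S₀| ≤ C |F|^{n-1}. -/
/-!
Orthogonality detects the quadric: `q • 1[ξ·ξ = 0] = ∑ₜ e(t ξ·ξ)` with `q = |F|`, so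
`q ∑_{ξ ∈ S₀} e(α·ξ) = ∑ₜ ∏ᵢ G(t, αᵢ)` where `G(t, a) = ∑ₓ e(t x² + a x)`. For `t ≠ 0` the
one-dimensional Gauss sum has `|G(t, a)|² = q`, so the terms `t ≠ 0` contribute at most
`q · q^(n/2)`, while the term `t = 0` vanishes for `α ≠ 0` and equals `q^n` for `α = 0`.
Hence `|∑_{S₀} e(α·ξ)| ≤ q^(n/2)` and `||S₀| - q^(n-1)| ≤ q^(n/2) ≤ q^(n-1) / 3`, the last step
because `n ≥ 4` and `q ≥ 3`.
-/

open Finset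

lemma AddChar.map_sum_eq_prod {A M ι : Type*} [AddCommMonoid A] [CommMonoid M]
    (ψ : AddChar A M) (s : Finset ι) (f : ι → A) :
    ψ (∑ i ∈ s, f i) = ∏ i ∈ s, ψ (f i) := by
  classical
  induction s using Finset.induction_on with
  | empty => simp
  | insert a s ha ih => rw [sum_insert ha, prod_insert ha, AddChar.map_add_eq_mul, ih]

section QuadraticGaussSum

variable {F : Type*} [Field F] [Fintype F] [DecidableEq F] {e : AddChar F ℂ}

def quadraticGaussSum (e : AddChar F ℂ) (t a : F) : ℂ :=
  ∑ x, e (t * (x * x) + a * x)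

lemma quadraticGaussSum_zero_left (he : e ≠ 1) (a : F) :
    quadraticGaussSum e 0 a = if a = 0 then (Fintype.card F : ℂ) else 0 := by
  simp_rw [quadraticGaussSum, zero_mul, zero_add, mul_comm a]
  exact_mod_cast AddChar.sum_mulShift a (AddChar.IsPrimitive.of_ne_one he)

lemma quadraticGaussSum_mul_conj (hF : ringChar F ≠ 2) (he : e ≠ 1) {t : F} (ht : t ≠ 0)
    (a : F) :
    quadraticGaussSum e t a * starRingEnd ℂ (quadraticGaussSum e t a) = Fintype.card F := by
  let Q : F → F := fun x => t * (x * x) + a * x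
  calc quadraticGaussSum e t a * starRingEnd ℂ (quadraticGaussSum e t a)
      = ∑ y, ∑ x, e (Q x - Q y) := by
        rw [quadraticGaussSum, map_sum, sum_mul_sum, sum_comm]
        refine sum_congr rfl fun y _ => sum_congr rfl fun x _ => ?_
        rw [← AddChar.map_neg_eq_conj, ← AddChar.map_add_eq_mul, sub_eq_add_neg]
    -- substitute `x = y + u`
    _ = ∑ y, ∑ u, e (Q u) * e (y * (2 * t * u)) := by
        refine sum_congr rfl fun y _ =>
          (Equiv.sum_comp (Equiv.addLeft y) fun x => e (Q x - Q y)).symm.trans ?_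
        refine sum_congr rfl fun u _ => ?_
        rw [← AddChar.map_add_eq_mul]
        congr 1
        simp only [Q, Equiv.coe_addLeft]
        ring
    _ = ∑ u, e (Q u) * ∑ y, e (y * (2 * t * u)) := by
        rw [sum_comm]
        simp_rw [mul_sum]
    _ = Fintype.card F := by
        simp_rw [AddChar.sum_mulShift _ (AddChar.IsPrimitive.of_ne_one he),
          mul_eq_zero, Ring.two_ne_zero hF, ht, false_or]
        simp [Q]

lemma norm_quadraticGaussSum (hF : ringChar F ≠ 2) (he : e ≠ 1) {t : F} (ht : t ≠ 0) (a : F) :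
    ‖quadraticGaussSum e t a‖ = √(Fintype.card F) := by
  have h := quadraticGaussSum_mul_conj hF he ht a
  rw [Complex.mul_conj, Complex.normSq_eq_norm_sq] at h
  rw [← Real.sqrt_sq (norm_nonneg _)]
  exact_mod_cast congrArg Real.sqrt (by exact_mod_cast h)

end QuadraticGaussSum

section ZeroSphere

variable {F ι : Type*} [Field F] [Fintype F] [DecidableEq F] [Fintype ι] [DecidableEq ι]
  {e : AddChar F ℂ}

variable (ι F) in
def zeroSphere : Finset (ι → F) :=
  univ.filter fun ξ => ∑ i, ξ i * ξ i = 0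

lemma card_mul_sum_zeroSphere (he : e ≠ 1) (α : ι → F) :
    (Fintype.card F : ℂ) * ∑ ξ ∈ zeroSphere F ι, e (∑ i, α i * ξ i)
      = ∑ t, ∏ i, quadraticGaussSum e t (α i) := by
  have horth : ∀ ξ : ι → F, ∑ t, e (t * ∑ i, ξ i * ξ i) =
      if ∑ i, ξ i * ξ i = 0 then (Fintype.card F : ℂ) else 0 := fun ξ => by
    exact_mod_cast AddChar.sum_mulShift _ (AddChar.IsPrimitive.of_ne_one he)
  calc (Fintype.card F : ℂ) * ∑ ξ ∈ zeroSphere F ι, e (∑ i, α i * ξ i)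
      = ∑ ξ : ι → F, (∑ t, e (t * ∑ i, ξ i * ξ i)) * e (∑ i, α i * ξ i) := by
        simp_rw [zeroSphere, horth, ite_mul, zero_mul, sum_ite, sum_const_zero, add_zero, mul_sum]
    _ = ∑ t, ∑ ξ : ι → F, ∏ i, e (t * (ξ i * ξ i) + α i * ξ i) := by
        simp_rw [sum_mul, ← AddChar.map_add_eq_mul, mul_sum, ← sum_add_distrib,
          AddChar.map_sum_eq_prod]
        exact sum_comm
    _ = ∑ t, ∏ i, quadraticGaussSum e t (α i) := by
        simp_rw [quadraticGaussSum, Fintype.prod_sum]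

lemma norm_card_mul_sum_zeroSphere_sub_le (hF : ringChar F ≠ 2) (he : e ≠ 1) (α : ι → F) :
    ‖(Fintype.card F : ℂ) * ∑ ξ ∈ zeroSphere F ι, e (∑ i, α i * ξ i)
        - ∏ i, quadraticGaussSum e 0 (α i)‖
      ≤ Fintype.card F * √(Fintype.card F) ^ Fintype.card ι := by
  rw [card_mul_sum_zeroSphere he, ← add_sum_erase _ _ (mem_univ 0), add_sub_cancel_left]
  calc ‖∑ t ∈ univ.erase (0 : F), ∏ i, quadraticGaussSum e t (α i)‖
      ≤ ∑ t ∈ univ.erase (0 : F), ‖∏ i, quadraticGaussSum e t (α i)‖ := norm_sum_le _ _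
    _ = ∑ t ∈ univ.erase (0 : F), √(Fintype.card F) ^ Fintype.card ι := by
        refine sum_congr rfl fun t ht => ?_
        simp_rw [norm_prod, norm_quadraticGaussSum hF he (ne_of_mem_erase ht), prod_const,
          card_univ]
    _ ≤ ∑ _t : F, √(Fintype.card F) ^ Fintype.card ι :=
        sum_le_sum_of_subset_of_nonneg (erase_subset _ _) fun _ _ _ => by positivity
    _ = Fintype.card F * √(Fintype.card F) ^ Fintype.card ι := by
        rw [sum_const, card_univ, nsmul_eq_mul]

lemma norm_sum_zeroSphere_le (hF : ringChar F ≠ 2) (he : e ≠ 1) {α : ι → F} (hα : α ≠ 0) :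
    ‖∑ ξ ∈ zeroSphere F ι, e (∑ i, α i * ξ i)‖
      ≤ √(Fintype.card F) ^ Fintype.card ι := by
  obtain ⟨i, hi⟩ : ∃ i, α i ≠ 0 := Function.ne_iff.1 hα
  have h := norm_card_mul_sum_zeroSphere_sub_le hF he α
  rw [prod_eq_zero (mem_univ i) (by rw [quadraticGaussSum_zero_left he, if_neg hi]), sub_zero,
    norm_mul, Complex.norm_natCast] at h
  exact le_of_mul_le_mul_left h (by exact_mod_cast Fintype.card_pos)

lemma abs_card_zeroSphere_sub_le [Nonempty ι] (hF : ringChar F ≠ 2) (he : e ≠ 1) :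
    |(#(zeroSphere F ι) : ℝ) - (Fintype.card F : ℝ) ^ (Fintype.card ι - 1)|
      ≤ √(Fintype.card F) ^ Fintype.card ι := by
  have h := norm_card_mul_sum_zeroSphere_sub_le hF he (0 : ι → F)
  simp only [Pi.zero_apply, zero_mul, sum_const_zero, AddChar.map_zero_eq_one, sum_const,
    nsmul_one, quadraticGaussSum_zero_left he, if_true, prod_const, card_univ] at h
  have hq : (0 : ℝ) < Fintype.card F := by exact_mod_cast Fintype.card_pos
  have hfactor : (Fintype.card F : ℂ) * #(zeroSphere F ι) - (Fintype.card F : ℂ) ^ Fintype.card ι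
      = ((Fintype.card F * (#(zeroSphere F ι) - (Fintype.card F : ℝ) ^ (Fintype.card ι - 1)) : ℝ)
        : ℂ) := by
    push_cast
    rw [mul_sub, mul_pow_sub_one Fintype.card_ne_zero]
  rw [hfactor, Complex.norm_real, Real.norm_eq_abs, abs_mul, abs_of_pos hq] at h
  exact le_of_mul_le_mul_left h hq

end ZeroSphere

lemma sqrt_pow_mul_le_pow_sub_one {q : ℝ} (hq : 1 ≤ q) {n : ℕ} (hn : 4 ≤ n) :
    √q ^ n * q ≤ q ^ (n - 1) :=
  calc √q ^ n * q = √q ^ (n + 2) := by rw [pow_add, Real.sq_sqrt (by linarith)]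
    _ ≤ √q ^ (2 * (n - 1)) := pow_le_pow_right₀ (Real.one_le_sqrt.2 hq) (by omega)
    _ = q ^ (n - 1) := by rw [pow_mul, Real.sq_sqrt (by linarith)]

lemma three_le_card_of_ringChar_ne_two {F : Type*} [Field F] [Fintype F]
    (hF : ringChar F ≠ 2) : 3 ≤ Fintype.card F := by
  have hodd := FiniteField.odd_card_of_char_ne_two hF
  have hgt : 1 < Fintype.card F := Fintype.one_lt_card
  omega

theorem stmt8_general (n : ℕ) (hn : 4 ≤ n) :
    ∃ C : ℝ, 0 < C ∧
      ∀ (F : Type) [Field F] [Fintype F] [DecidableEq F], ringChar F ≠ 2 →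
      ∀ (e : AddChar F ℂ), e ≠ 1 →
        (∀ α : Fin n → F, α ≠ 0 →
          ‖∑ ξ ∈ Finset.univ.filter (fun ξ : Fin n → F => ∑ i, ξ i * ξ i = 0),
              e (∑ i, α i * ξ i)‖
            ≤ C * (Fintype.card F : ℝ) ^ ((n : ℝ) / 2)) ∧
        C⁻¹ * (Fintype.card F : ℝ) ^ (n - 1) ≤
          ((Finset.univ.filter (fun ξ : Fin n → F => ∑ i, ξ i * ξ i = 0)).card : ℝ) ∧
        ((Finset.univ.filter (fun ξ : Fin n → F => ∑ i, ξ i * ξ i = 0)).card : ℝ) ≤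
          C * (Fintype.card F : ℝ) ^ (n - 1) := by
  refine ⟨2, two_pos, fun F _ _ _ hF e he => ?_⟩
  have : Nonempty (Fin n) := ⟨⟨0, by omega⟩⟩
  have hq : (3 : ℝ) ≤ Fintype.card F := by exact_mod_cast three_le_card_of_ringChar_ne_two hF
  have hsqrt : √(Fintype.card F) ^ n = (Fintype.card F : ℝ) ^ ((n : ℝ) / 2) := by
    rw [Real.rpow_div_two_eq_sqrt _ (by positivity), Real.rpow_natCast]
  have hsmall := sqrt_pow_mul_le_pow_sub_one (q := Fintype.card F) (by linarith) hn
  have hcard := abs_le.1 (abs_card_zeroSphere_sub_le (ι := Fin n) hF he)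
  rw [Fintype.card_fin] at hcard
  refine ⟨fun α hα => ?_, ?_, ?_⟩
  · have h := norm_sum_zeroSphere_le hF he hα
    rw [Fintype.card_fin, hsqrt] at h
    exact h.trans (le_mul_of_one_le_left (by positivity) one_le_two)
  · change _ ≤ (#(zeroSphere F (Fin n)) : ℝ)
    nlinarith
  · change (#(zeroSphere F (Fin n)) : ℝ) ≤ _
    nlinarith

/-- Let `n ≥ 4` be even. There is `C = C(n) > 0` such that for every finite field `F` of
odd characteristic and every nontrivial additive character `e` of `F`, the 0-sphere
`S₀ = {ξ ∈ F^n : ξ·ξ = 0}` satisfies `|∑_{ξ∈S₀} e(α·ξ)| ≤ C |F|^{n/2}` for all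
`α ≠ 0`, and `C⁻¹ |F|^{n-1} ≤ |S₀| ≤ C |F|^{n-1}`. -/
theorem stmt8 (n : ℕ) (hn : 4 ≤ n) (hneven : Even n) :
    ∃ C : ℝ, 0 < C ∧
      ∀ (F : Type) [Field F] [Fintype F] [DecidableEq F], ringChar F ≠ 2 →
      ∀ (e : AddChar F ℂ), e ≠ 1 →
        (∀ α : Fin n → F, α ≠ 0 →
          ‖∑ ξ ∈ Finset.univ.filter (fun ξ : Fin n → F => ∑ i, ξ i * ξ i = 0),
              e (∑ i, α i * ξ i)‖
            ≤ C * (Fintype.card F : ℝ) ^ ((n : ℝ) / 2)) ∧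
        C⁻¹ * (Fintype.card F : ℝ) ^ (n - 1) ≤
          ((Finset.univ.filter (fun ξ : Fin n → F => ∑ i, ξ i * ξ i = 0)).card : ℝ) ∧
        ((Finset.univ.filter (fun ξ : Fin n → F => ∑ i, ξ i * ξ i = 0)).card : ℝ) ≤
          C * (Fintype.card F : ℝ) ^ (n - 1) :=
  stmt8_general n hn
end

section
/- Let d ≥ 4 be an even integer. There exists a constant C = C(d) > 0 such that for every finite field F of odd characteristic and every subset E of the paraboloid P ⊆ F^d, the number of triples (x,y,z) ∈ E³ with x − z + y ∈ P and (z̄ − ȳ)·(z̄ − ȳ) ≠ 0 is at most C ( |F|^{-1} |E|³ + |F|^{(d-2)/2} |E|² ). -/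
/-
Write the points of the paraboloid as `(a, a ⬝ᵥ a)` and let `A` be the projection of `E`. In odd
characteristic, `x - z + y ∈ P` means `(x̄ - z̄) ⬝ᵥ (z̄ - ȳ) = 0`, so for a fixed pair `(y, z)`
the admissible `x` are the points of `A` on the hyperplane through `z̄` orthogonal to `z̄ - ȳ`.
Each such count is `|A| / q` plus a discrepancy, and by Cauchy–Schwarz the sum of the
discrepancies is at most the square root of

* the number of pairs of pairs `(y, z), (y', z')` with the same hyperplane, which is at most
  `|A|³`: when `z̄ - ȳ` is not isotropic, `z̄` is the foot of the perpendicular from `ȳ`, so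
  `ȳ'` and the hyperplane determine `z̄'`;
* times the sum over all hyperplanes of the squared discrepancies, which is at most
  `q^(d-2) |A|`: summed over all equations `a ⬝ᵥ v = c` it equals `(q - 1) q^(d-2) |A|`, and
  every hyperplane has `q - 1` equations.
-/

open Finset Matrix

section Fibers
variable {ι κ : Type*} [DecidableEq κ]

lemma sum_card_fiber_sq (s : Finset ι) (t : Finset κ) (f : ι → κ) (h : ∀ a ∈ s, f a ∈ t) :
    ∑ c ∈ t, #{a ∈ s | f a = c} ^ 2 = #{r ∈ s ×ˢ s | f r.1 = f r.2} := by
  rw [card_eq_sum_card_fiberwise (f := fun r => f r.1) (t := t)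
    (fun r hr => h _ (mem_product.1 (mem_filter.1 hr).1).1)]
  refine sum_congr rfl fun c _ => ?_
  rw [sq, ← card_product, filter_filter]
  congr 1
  ext ⟨a, b⟩
  simp only [mem_filter, mem_product]
  grind

lemma sq_sum_comp_le (S : Finset ι) (f : ι → κ) (w : κ → ℝ) :
    (∑ p ∈ S, w (f p)) ^ 2 ≤ #{r ∈ S ×ˢ S | f r.1 = f r.2} * ∑ k ∈ S.image f, w k ^ 2 := by
  rw [sum_comp, ← sum_card_fiber_sq S (S.image f) f fun a ha => mem_image_of_mem f ha]
  push_cast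
  simpa only [nsmul_eq_mul] using sum_mul_sq_le_sq_mul_sq _ _ _

lemma mul_sum_image_le_sum_comp (D : Finset ι) (Φ : ι → κ) {w : κ → ℝ} (hw : ∀ k, 0 ≤ w k)
    {m : ℕ} (hm : ∀ k ∈ D.image Φ, m ≤ #{x ∈ D | Φ x = k}) :
    m * ∑ k ∈ D.image Φ, w k ≤ ∑ x ∈ D, w (Φ x) := by
  rw [Finset.sum_comp (f := w) (g := Φ), mul_sum]
  gcongr with k hk
  rw [nsmul_eq_mul]
  exact mul_le_mul_of_nonneg_right (by exact_mod_cast hm k hk) (hw k)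

lemma sum_sq_card_fiber_sub_div [Fintype κ] [Nonempty κ] (s : Finset ι) (f : ι → κ) :
    ∑ c, ((#{a ∈ s | f a = c} : ℝ) - #s / Fintype.card κ) ^ 2
      = #{r ∈ s ×ˢ s | f r.1 = f r.2} - (#s : ℝ) ^ 2 / Fintype.card κ := by
  have hsum : ∑ c, (#{a ∈ s | f a = c} : ℝ) = #s := by
    exact_mod_cast (card_eq_sum_card_fiberwise fun a _ => mem_univ (f a)).symm
  have hsq : ∑ c, (#{a ∈ s | f a = c} : ℝ) ^ 2 = #{r ∈ s ×ˢ s | f r.1 = f r.2} := by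
    exact_mod_cast sum_card_fiber_sq s univ f fun a _ => mem_univ (f a)
  simp only [sub_sq, sum_add_distrib, sum_sub_distrib, ← sum_mul, ← mul_sum, hsum, hsq, sum_const,
    card_univ, nsmul_eq_mul]
  field_simp
  ring

end Fibers

section Hyperplanes

variable {F : Type*} [Field F] [Fintype F] [DecidableEq F] {n : ℕ}

lemma card_filter_dotProduct_eq_zero_mul {Δ : Fin n → F} (hΔ : Δ ≠ 0) :
    #{v | Δ ⬝ᵥ v = 0} * Fintype.card F = Fintype.card F ^ n := by
  let f : (Fin n → F) →+ F := AddMonoidHom.mk' (Δ ⬝ᵥ ·) (dotProduct_add Δ)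
  obtain ⟨j, hj⟩ := Function.ne_iff.1 hΔ
  have hf : Function.Surjective f := fun c =>
    ⟨Pi.single j (c / Δ j), by simp [f, dotProduct_single, mul_div_cancel₀ _ hj]⟩
  have hfib (c : F) : #{v | f v = c} = #{v | Δ ⬝ᵥ v = 0} :=
    AddMonoidHom.card_fiber_eq_of_mem_range f (hf c) (hf 0)
  calc #{v | Δ ⬝ᵥ v = 0} * Fintype.card F = ∑ c : F, #{v | f v = c} := by
        simp [hfib, mul_comm]
    _ = Fintype.card F ^ n := by
        rw [← card_eq_sum_card_fiberwise fun v _ => mem_univ (f v)]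
        simp

def hyperplane (v : Fin n → F) (c : F) : Finset (Fin n → F) := {a | a ⬝ᵥ v = c}

@[simp] lemma mem_hyperplane {v a : Fin n → F} {c : F} : a ∈ hyperplane v c ↔ a ⬝ᵥ v = c := by
  simp [hyperplane]

lemma inter_hyperplane (A : Finset (Fin n → F)) (v : Fin n → F) (c : F) :
    A ∩ hyperplane v c = {a ∈ A | a ⬝ᵥ v = c} := by
  ext; simp

lemma hyperplane_smul {l : F} (hl : l ≠ 0) (v : Fin n → F) (c : F) :
    hyperplane (l • v) (l * c) = hyperplane v c := by
  ext a; simp [dotProduct_smul, hl]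

local notation "q" => (Fintype.card F : ℝ)

noncomputable def discrepancy (A H : Finset (Fin n → F)) : ℝ := #(A ∩ H) - #A / Fintype.card F

lemma card_filter_dotProduct_eq_dotProduct (a b : Fin n → F) :
    (#{v : Fin n → F | a ⬝ᵥ v = b ⬝ᵥ v} : ℝ) = if a = b then q ^ n else q ^ n / q := by
  split_ifs with hab
  · simp [hab]
  · have hq : q ≠ 0 := by positivity
    have h := card_filter_dotProduct_eq_zero_mul (sub_ne_zero.2 hab)
    simp_rw [sub_dotProduct, sub_eq_zero] at h
    rw [eq_div_iff hq]
    exact_mod_cast h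

lemma sum_card_filter_dotProduct_eq (A : Finset (Fin n → F)) :
    ∑ v : Fin n → F, (#{r ∈ A ×ˢ A | r.1 ⬝ᵥ v = r.2 ⬝ᵥ v} : ℝ)
      = #A * q ^ n + (#A ^ 2 - #A) * (q ^ n / q) := by
  have hswap : ∑ v : Fin n → F, #{r ∈ A ×ˢ A | r.1 ⬝ᵥ v = r.2 ⬝ᵥ v}
      = ∑ r ∈ A ×ˢ A, #{v : Fin n → F | r.1 ⬝ᵥ v = r.2 ⬝ᵥ v} := by
    simp only [card_filter]
    exact sum_comm
  have hsplit (r : (Fin n → F) × (Fin n → F)) : (if r.1 = r.2 then q ^ n else q ^ n / q)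
      = q ^ n / q + if r.1 = r.2 then q ^ n - q ^ n / q else 0 := by
    split_ifs <;> ring
  have hdiag : #{r ∈ A ×ˢ A | r.1 = r.2} = #A := by rw [← diag_eq_filter, diag_card]
  rw [← Nat.cast_sum, hswap, Nat.cast_sum]
  simp_rw [card_filter_dotProduct_eq_dotProduct, hsplit, sum_add_distrib, ← sum_filter, sum_const,
    card_product, hdiag, nsmul_eq_mul]
  push_cast
  ring

lemma sum_sum_discrepancy_hyperplane_sq (A : Finset (Fin n → F)) :
    ∑ v, ∑ c, discrepancy A (hyperplane v c) ^ 2 = (q - 1) * q ^ n * #A / q := by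
  simp_rw [discrepancy, inter_hyperplane, sum_sq_card_fiber_sub_div, sum_sub_distrib,
    sum_card_filter_dotProduct_eq, sum_const, card_univ, Fintype.card_fun, Fintype.card_fin,
    nsmul_eq_mul]
  push_cast
  field_simp
  ring

variable (n F) in
def affineHyperplanes : Finset (Finset (Fin n → F)) :=
  (({v | v ≠ 0} : Finset (Fin n → F)) ×ˢ univ).image fun vc => hyperplane vc.1 vc.2

lemma sum_discrepancy_affineHyperplanes_sq_le (A : Finset (Fin n → F)) :
    ∑ H ∈ affineHyperplanes F n, discrepancy A H ^ 2 ≤ q ^ n * #A / q := by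
  set D : Finset ((Fin n → F) × F) := ({v | v ≠ 0} : Finset (Fin n → F)) ×ˢ univ
  have hq : (1 : ℝ) < q := by exact_mod_cast Fintype.one_lt_card
  -- each hyperplane has the `q - 1` equations `(l • v) ⬝ᵥ a = l * c`, `l ≠ 0`
  have hfib : ∀ H ∈ affineHyperplanes F n,
      Fintype.card F - 1 ≤ #{x ∈ D | hyperplane x.1 x.2 = H} := by
    rintro _ hH
    obtain ⟨⟨v, c⟩, hvc, rfl⟩ := mem_image.1 hH
    have hv : v ≠ 0 := by simpa [D] using hvc
    rw [← card_univ, ← card_erase_of_mem (mem_univ 0)]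
    refine card_le_card_of_injOn (fun l => (l • v, l * c)) (fun l hl => ?_) fun l _ l' _ h => ?_
    · have hl : l ≠ 0 := ne_of_mem_erase hl
      simp [D, hl, hv, hyperplane_smul]
    · exact smul_left_injective F hv (Prod.mk.inj h).1
  have hsum := mul_sum_image_le_sum_comp D (fun x => hyperplane x.1 x.2)
    (fun H => sq_nonneg (discrepancy A H)) hfib
  have hD : ∑ x ∈ D, discrepancy A (hyperplane x.1 x.2) ^ 2 ≤ (q - 1) * q ^ n * #A / q := by
    rw [← sum_sum_discrepancy_hyperplane_sq, ← Fintype.sum_prod_type']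
    exact sum_le_sum_of_subset_of_nonneg (subset_univ D) fun _ _ _ => sq_nonneg _
  rw [Nat.cast_sub Fintype.card_pos, Nat.cast_one] at hsum
  rw [mul_assoc, mul_div_assoc] at hD
  exact le_of_mul_le_mul_left (hsum.trans hD) (by linarith)

def perpHyperplane (y z : Fin n → F) : Finset (Fin n → F) := hyperplane (z - y) (z ⬝ᵥ (z - y))

lemma mem_perpHyperplane {y z a : Fin n → F} :
    a ∈ perpHyperplane y z ↔ (a - z) ⬝ᵥ (z - y) = 0 := by
  rw [perpHyperplane, mem_hyperplane, sub_dotProduct, sub_eq_zero]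

lemma inter_perpHyperplane (A : Finset (Fin n → F)) (y z : Fin n → F) :
    A ∩ perpHyperplane y z = {a ∈ A | (a - z) ⬝ᵥ (z - y) = 0} := by
  ext; simp [mem_perpHyperplane]

/-- `z` is the foot of the perpendicular from `y` to the hyperplane. -/
lemma eq_of_perpHyperplane_eq {y z z' : Fin n → F} (hz : (z - y) ⬝ᵥ (z - y) ≠ 0)
    (h : perpHyperplane y z = perpHyperplane y z') : z = z' := by
  set v := z - y
  set v' := z' - y
  have hmem (a : Fin n → F) : (a - z) ⬝ᵥ v = 0 ↔ (a - z') ⬝ᵥ v' = 0 := by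
    rw [← mem_perpHyperplane, ← mem_perpHyperplane, h]
  have hzz' : (z - z') ⬝ᵥ v' = 0 := (hmem z).1 (by simp)
  have hvv' : v' ⬝ᵥ v = v ⬝ᵥ v := by
    have h' := (hmem z').2 (by simp)
    rwa [show z' - z = v' - v by simp [v, v'], sub_dotProduct, sub_eq_zero] at h'
  have hv : v' = v := by
    refine dotProduct_eq _ _ fun u => ?_
    set μ := u ⬝ᵥ v / v ⬝ᵥ v
    -- `z + (u - μ • v)` lies on the first hyperplane, hence on the second
    have hu := (hmem (z + (u - μ • v))).1 (by
      simp [sub_dotProduct, smul_dotProduct, μ, div_mul_cancel₀ _ hz])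
    rw [add_sub_right_comm, add_dotProduct, hzz', zero_add, sub_dotProduct, smul_dotProduct,
      dotProduct_comm v, hvv', smul_eq_mul, div_mul_cancel₀ _ hz, sub_eq_zero] at hu
    rw [dotProduct_comm, hu, dotProduct_comm]
  simpa [v, v'] using hv.symm

def nonIsotropicPairs (A : Finset (Fin n → F)) : Finset ((Fin n → F) × (Fin n → F)) :=
  {p ∈ A ×ˢ A | (p.2 - p.1) ⬝ᵥ (p.2 - p.1) ≠ 0}

lemma card_perpHyperplane_coincidences_le (A : Finset (Fin n → F)) :
    #{r ∈ nonIsotropicPairs A ×ˢ nonIsotropicPairs A |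
      perpHyperplane r.1.1 r.1.2 = perpHyperplane r.2.1 r.2.2} ≤ #A ^ 3 := by
  calc _ ≤ #((A ×ˢ A) ×ˢ A) := by
        refine card_le_card_of_injOn (fun r => (r.1, r.2.1)) (fun r hr => ?_)
          fun r hr r' hr' h => ?_
        · simp only [mem_coe, nonIsotropicPairs, mem_filter, mem_product] at hr
          simp [hr.1.1.1, hr.1.2.1]
        · simp only [mem_coe, nonIsotropicPairs, mem_filter, mem_product] at hr hr'
          obtain ⟨h1, h21⟩ := Prod.mk.inj h
          have h22 : r.2.2 = r'.2.2 := eq_of_perpHyperplane_eq hr.1.2.2 <| by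
            rw [← hr.2, h1, hr'.2, h21]
          exact Prod.ext h1 (Prod.ext h21 h22)
    _ = #A ^ 3 := by simp only [card_product]; ring

lemma card_orthogonal_triples_eq (A : Finset (Fin n → F)) :
    #{t ∈ A ×ˢ A ×ˢ A | (t.1 - t.2.2) ⬝ᵥ (t.2.2 - t.2.1) = 0 ∧
        (t.2.2 - t.2.1) ⬝ᵥ (t.2.2 - t.2.1) ≠ 0}
      = ∑ p ∈ nonIsotropicPairs A, #(A ∩ perpHyperplane p.1 p.2) := by
  rw [card_filter, sum_product, sum_comm, nonIsotropicPairs, sum_filter]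
  refine sum_congr rfl fun p _ => ?_
  split_ifs with hp
  · rw [inter_perpHyperplane, card_filter]
    simp only [hp, ne_eq, not_false_eq_true, and_true]
  · exact sum_eq_zero fun x _ => if_neg fun h => hp h.2

lemma card_orthogonal_triples_le (A : Finset (Fin n → F)) :
    (#{t ∈ A ×ˢ A ×ˢ A | (t.1 - t.2.2) ⬝ᵥ (t.2.2 - t.2.1) = 0 ∧
        (t.2.2 - t.2.1) ⬝ᵥ (t.2.2 - t.2.1) ≠ 0} : ℝ)
      ≤ #A ^ 3 / q + √(q ^ n / q) * #A ^ 2 := by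
  set S := nonIsotropicPairs A
  set H : (Fin n → F) × (Fin n → F) → Finset (Fin n → F) := fun p => perpHyperplane p.1 p.2
  have hcount : (#{t ∈ A ×ˢ A ×ˢ A | (t.1 - t.2.2) ⬝ᵥ (t.2.2 - t.2.1) = 0 ∧
        (t.2.2 - t.2.1) ⬝ᵥ (t.2.2 - t.2.1) ≠ 0} : ℝ)
      = #S * (#A / q) + ∑ p ∈ S, discrepancy A (H p) := by
    rw [card_orthogonal_triples_eq, Nat.cast_sum, ← nsmul_eq_mul, ← sum_const, ← sum_add_distrib]
    exact sum_congr rfl fun p _ => by rw [discrepancy]; ring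
  have hS : (#S : ℝ) ≤ #A ^ 2 := by
    exact_mod_cast (card_filter_le _ _).trans_eq (by rw [card_product, sq])
  have himage : S.image H ⊆ affineHyperplanes F n := by
    intro _ hH
    obtain ⟨p, hp, rfl⟩ := mem_image.1 hH
    have hp : (p.2 - p.1) ⬝ᵥ (p.2 - p.1) ≠ 0 := (mem_filter.1 hp).2
    exact mem_image.2 ⟨(p.2 - p.1, _), by simpa using fun h => hp (by simp [h]), rfl⟩
  have hCS : (∑ p ∈ S, discrepancy A (H p)) ^ 2 ≤ #A ^ 3 * (q ^ n * #A / q) := by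
    refine (sq_sum_comp_le S H _).trans (mul_le_mul ?_ ?_ (sum_nonneg fun _ _ => sq_nonneg _)
      (by positivity))
    · exact_mod_cast card_perpHyperplane_coincidences_le A
    · exact (sum_le_sum_of_subset_of_nonneg himage fun _ _ _ => sq_nonneg _).trans
        (sum_discrepancy_affineHyperplanes_sq_le A)
  have hdisc : ∑ p ∈ S, discrepancy A (H p) ≤ √(q ^ n / q) * #A ^ 2 := by
    calc _ ≤ √(#A ^ 3 * (q ^ n * #A / q)) := (le_abs_self _).trans (Real.abs_le_sqrt hCS)
      _ = √(q ^ n / q) * #A ^ 2 := by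
        rw [show (#A : ℝ) ^ 3 * (q ^ n * #A / q) = q ^ n / q * (#A ^ 2) ^ 2 by ring,
          Real.sqrt_mul' _ (by positivity), Real.sqrt_sq (by positivity)]
  have hmain : #S * (#A / q) ≤ #A ^ 3 / q := by
    calc _ ≤ (#A : ℝ) ^ 2 * (#A / q) := by gcongr
      _ = #A ^ 3 / q := by ring
  linarith

end Hyperplanes

section Paraboloid

variable {F : Type*} [Field F] {n : ℕ}

lemma sub_add_paraboloid_iff (h2 : (2 : F) ≠ 0) {x y z : (Fin n → F) × F}
    (hx : x.2 = x.1 ⬝ᵥ x.1) (hy : y.2 = y.1 ⬝ᵥ y.1) (hz : z.2 = z.1 ⬝ᵥ z.1) :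
    (x - z + y).2 = (x - z + y).1 ⬝ᵥ (x - z + y).1 ↔ (x.1 - z.1) ⬝ᵥ (z.1 - y.1) = 0 := by
  have key : (x - z + y).1 ⬝ᵥ (x - z + y).1 - (x - z + y).2
      = -2 * ((x.1 - z.1) ⬝ᵥ (z.1 - y.1)) := by
    simp only [Prod.fst_add, Prod.fst_sub, Prod.snd_add, Prod.snd_sub, hx, hy, hz, dotProduct,
      Pi.add_apply, Pi.sub_apply, mul_sum, ← sum_add_distrib, ← sum_sub_distrib]
    exact sum_congr rfl fun i _ => by ring
  rw [← sub_eq_zero, ← neg_eq_zero, neg_sub, key, mul_eq_zero, neg_eq_zero]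
  simp [h2]

variable [DecidableEq F]

lemma card_paraboloid_triples_eq (h2 : (2 : F) ≠ 0) {E : Finset ((Fin n → F) × F)}
    (hE : ∀ p ∈ E, p.2 = p.1 ⬝ᵥ p.1) :
    #{t ∈ E ×ˢ E ×ˢ E |
        (t.1 - t.2.2 + t.2.1).2 = (t.1 - t.2.2 + t.2.1).1 ⬝ᵥ (t.1 - t.2.2 + t.2.1).1 ∧
        (t.2.2.1 - t.2.1.1) ⬝ᵥ (t.2.2.1 - t.2.1.1) ≠ 0}
      = #{t ∈ E.image Prod.fst ×ˢ E.image Prod.fst ×ˢ E.image Prod.fst |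
          (t.1 - t.2.2) ⬝ᵥ (t.2.2 - t.2.1) = 0 ∧ (t.2.2 - t.2.1) ⬝ᵥ (t.2.2 - t.2.1) ≠ 0} := by
  have hlift (x) (hx : x ∈ E) : (x.1, x.1 ⬝ᵥ x.1) = x := Prod.ext rfl (hE x hx).symm
  have hmem (a : Fin n → F) : a ∈ E.image Prod.fst ↔ (a, a ⬝ᵥ a) ∈ E :=
    ⟨by rintro h; obtain ⟨x, hx, rfl⟩ := mem_image.1 h; rwa [hlift x hx],
      fun h => mem_image_of_mem Prod.fst h⟩
  refine card_nbij' (fun t => (t.1.1, t.2.1.1, t.2.2.1))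
    (fun t => ((t.1, t.1 ⬝ᵥ t.1), (t.2.1, t.2.1 ⬝ᵥ t.2.1), (t.2.2, t.2.2 ⬝ᵥ t.2.2)))
    ?_ ?_ ?_ fun _ _ => rfl
  · rintro ⟨x, y, z⟩ ht
    simp only [mem_coe, mem_filter, mem_product] at ht ⊢
    obtain ⟨⟨hx, hy, hz⟩, hxyz, hyz⟩ := ht
    exact ⟨⟨mem_image_of_mem _ hx, mem_image_of_mem _ hy, mem_image_of_mem _ hz⟩,
      (sub_add_paraboloid_iff h2 (hE x hx) (hE y hy) (hE z hz)).1 hxyz, hyz⟩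
  · rintro ⟨a, b, c⟩ ht
    simp only [mem_coe, mem_filter, mem_product, hmem] at ht ⊢
    exact ⟨ht.1, (sub_add_paraboloid_iff h2 rfl rfl rfl).2 ht.2.1, ht.2.2⟩
  · rintro ⟨x, y, z⟩ ht
    simp only [mem_coe, mem_filter, mem_product] at ht
    simp only [hlift x ht.1.1, hlift y ht.1.2.1, hlift z ht.1.2.2]

lemma card_image_fst_of_paraboloid {E : Finset ((Fin n → F) × F)}
    (hE : ∀ p ∈ E, p.2 = p.1 ⬝ᵥ p.1) : #(E.image Prod.fst) = #E :=
  card_image_of_injOn fun x hx y hy h => Prod.ext h (by rw [hE x hx, hE y hy, h])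

end Paraboloid

lemma sqrt_pow_sub_one_div {x : ℝ} (hx : 0 < x) {d : ℕ} (hd : 1 ≤ d) :
    √(x ^ (d - 1) / x) = x ^ (((d : ℝ) - 2) / 2) := by
  rw [Real.sqrt_eq_rpow, ← Real.rpow_natCast, ← Real.rpow_sub_one hx.ne', ← Real.rpow_mul hx.le,
    Nat.cast_sub hd]
  push_cast
  ring_nf

theorem stmt16_general (d : ℕ) (hd : 4 ≤ d) :
    ∃ C : ℝ, 0 < C ∧
      ∀ (F : Type) [Field F] [Fintype F] [DecidableEq F], ringChar F ≠ 2 →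
      ∀ E : Finset ((Fin (d - 1) → F) × F),
        (∀ p ∈ E, p.2 = ∑ i, p.1 i * p.1 i) →
        ((((E ×ˢ E ×ˢ E).filter (fun t =>
              (t.1 - t.2.2 + t.2.1).2 =
                (∑ i, (t.1 - t.2.2 + t.2.1).1 i * (t.1 - t.2.2 + t.2.1).1 i) ∧
              (∑ i, (t.2.2.1 i - t.2.1.1 i) * (t.2.2.1 i - t.2.1.1 i)) ≠ 0)).card : ℝ))
          ≤ C * ((Fintype.card F : ℝ)⁻¹ * (E.card : ℝ) ^ 3 +
              (Fintype.card F : ℝ) ^ (((d : ℝ) - 2) / 2) * (E.card : ℝ) ^ 2) := by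
  refine ⟨1, one_pos, fun F _ _ _ hF E hE => ?_⟩
  have hq : (0 : ℝ) < Fintype.card F := by exact_mod_cast Fintype.card_pos
  calc _ = (#{t ∈ E.image Prod.fst ×ˢ E.image Prod.fst ×ˢ E.image Prod.fst |
          (t.1 - t.2.2) ⬝ᵥ (t.2.2 - t.2.1) = 0 ∧ (t.2.2 - t.2.1) ⬝ᵥ (t.2.2 - t.2.1) ≠ 0} : ℝ) :=
        congrArg Nat.cast (card_paraboloid_triples_eq (Ring.two_ne_zero hF) hE)
    _ ≤ _ := card_orthogonal_triples_le _
    _ = _ := by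
      rw [card_image_fst_of_paraboloid hE, sqrt_pow_sub_one_div hq (by omega)]
      ring

/-- Let `d ≥ 4` be even. There is `C = C(d) > 0` such that for every finite field `F` of
odd characteristic and every subset `E` of the paraboloid
`P = {(x̄, x̄·x̄) : x̄ ∈ F^{d-1}} ⊆ F^d` (points of `F^d` modeled as pairs `(x̄, x_d)`),
the number of triples `(x,y,z) ∈ E³` with `x − z + y ∈ P` and
`(z̄ − ȳ)·(z̄ − ȳ) ≠ 0` is at most `C (|F|⁻¹ |E|³ + |F|^{(d-2)/2} |E|²)`. -/
theorem stmt16 (d : ℕ) (hd : 4 ≤ d) (hdeven : Even d) :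
    ∃ C : ℝ, 0 < C ∧
      ∀ (F : Type) [Field F] [Fintype F] [DecidableEq F], ringChar F ≠ 2 →
      ∀ E : Finset ((Fin (d - 1) → F) × F),
        (∀ p ∈ E, p.2 = ∑ i, p.1 i * p.1 i) →
        ((((E ×ˢ E ×ˢ E).filter (fun t =>
              (t.1 - t.2.2 + t.2.1).2 =
                (∑ i, (t.1 - t.2.2 + t.2.1).1 i * (t.1 - t.2.2 + t.2.1).1 i) ∧
              (∑ i, (t.2.2.1 i - t.2.1.1 i) * (t.2.2.1 i - t.2.1.1 i)) ≠ 0)).card : ℝ))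
          ≤ C * ((Fintype.card F : ℝ)⁻¹ * (E.card : ℝ) ^ 3 +
              (Fintype.card F : ℝ) ^ (((d : ℝ) - 2) / 2) * (E.card : ℝ) ^ 2) :=
  stmt16_general d hd
end
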